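/- Let Ω ⊆ ℝ^{2n} be a centrally symmetric convex body (compact convex, Ω = −Ω, with 0 in its interior) and F a linear subspace of ℝ^{2n}. Let Π_F and Π_{J(F)} denote the orthogonal projections onto F and onto J(F) respectively. Then (Π_F Ω)^{ℏ,σ,J(F)} = Ω^{ℏ,σ} ∩ J(F) and (Ω ∩ F)^{ℏ,σ,J(F)} = Π_{J(F)}(Ω^{ℏ,σ}). -/

import Mathlib

/-!
Since `σ(z, z') = ⟪J z, z'⟫` with `J` orthogonal, the symplectic polar of `Ω` is the Euclidean
`ℏ`-polar of `J Ω`, while `J (Π_F Ω) = Π_{J F} (J Ω)` and `J (Ω ∩ F) = J Ω ∩ J F`. Both identities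
thus become Euclidean facts about a subspace `V` and a set `K`. Polars inside `V` do not see the
projection onto `V`, because `⟪Π_V x, y⟫ = ⟪x, y⟫` for `y ∈ V`. If `K` is closed and convex with
`0` in its interior, then `K°` is compact, and a point of `V` outside the compact convex set
`Π_V (K°)` is separated from it by a vector of `V`; by the bipolar inclusion `K°° ⊆ K` a multiple
of that vector lies in `K ∩ V`, so the point is not in the polar of `K ∩ V`.
-/

open MeasureTheory Real Metric
open scoped RealInnerProductSpace Pointwise

noncomputable section

/-- `ℝⁿ` with its Euclidean structure. -/
abbrev En (n : ℕ) := EuclideanSpace ℝ (Fin n)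

/-- The phase space `ℝ²ⁿ = ℝⁿ × ℝⁿ` with its Euclidean structure, the first block of
coordinates being the positions `x` and the second block the momenta `p`. -/
abbrev PS (n : ℕ) := EuclideanSpace ℝ (Fin n ⊕ Fin n)

/-- The standard symplectic matrix `J = [[0, I], [-I, 0]]`. -/
def Jmat (n : ℕ) : Matrix (Fin n ⊕ Fin n) (Fin n ⊕ Fin n) ℝ :=
  Matrix.fromBlocks 0 1 (-1) 0

/-- The standard symplectic form `σ(z, z') = ⟨Jz, z'⟩`. -/
def symp (n : ℕ) (z z' : PS n) : ℝ := ⟪(Matrix.toEuclideanLin (Jmat n)) z, z'⟫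

/-- The quadratic form `z ↦ ⟨Mz, z⟩`. -/
def qf {m : Type*} [Fintype m] [DecidableEq m] (M : Matrix m m ℝ)
    (z : EuclideanSpace ℝ m) : ℝ := ⟪(Matrix.toEuclideanLin M) z, z⟫

/-- The symplectic `ℏ`-polar dual `Ω^{ℏ,σ} = {z' : ∀ z ∈ Ω, σ(z, z') ≤ ℏ}`. -/
def sympDual (n : ℕ) (ℏ : ℝ) (Ω : Set (PS n)) : Set (PS n) :=
  {z' | ∀ z ∈ Ω, symp n z z' ≤ ℏ}

/-- A linear automorphism of `ℝ²ⁿ` is symplectic if it preserves the symplectic form. -/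
def IsSymplectic {n : ℕ} (S : PS n ≃ₗ[ℝ] PS n) : Prop :=
  ∀ z z', symp n (S z) (S z') = symp n z z'

/-- The symplectic `ℏ`-polar dual of `Y` taken inside the subspace `G`:
`Y^{ℏ,σ,G} = {z' ∈ G : ∀ z ∈ Y, σ(z, z') ≤ ℏ}`. -/
def sympDualIn (n : ℕ) (ℏ : ℝ) (G : Submodule ℝ (PS n)) (Y : Set (PS n)) : Set (PS n) :=
  {z' | z' ∈ G ∧ ∀ z ∈ Y, symp n z z' ≤ ℏ}

open Set

section InnerPolar

variable {E : Type*} [NormedAddCommGroup E] [InnerProductSpace ℝ E]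

/-- One-sided polar at level `r`, unlike Mathlib's absolute polar `LinearMap.polar`. -/
def innerPolar (r : ℝ) (s : Set E) : Set E :=
  {y | ∀ x ∈ s, ⟪x, y⟫ ≤ r}

theorem innerPolar_eq_iInter (r : ℝ) (s : Set E) :
    innerPolar r s = ⋂ x ∈ s, {y | ⟪x, y⟫ ≤ r} := by
  ext y
  simp [innerPolar]

theorem convex_innerPolar (r : ℝ) (s : Set E) : Convex ℝ (innerPolar r s) := by
  rw [innerPolar_eq_iInter]
  exact convex_iInter₂ fun x _ => convex_halfSpace_le (innerₛₗ ℝ x).isLinear r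

theorem isClosed_innerPolar (r : ℝ) (s : Set E) : IsClosed (innerPolar r s) := by
  rw [innerPolar_eq_iInter]
  exact isClosed_biInter fun x _ => isClosed_le (continuous_const.inner continuous_id)
    continuous_const

theorem zero_mem_innerPolar {r : ℝ} (hr : 0 ≤ r) (s : Set E) : (0 : E) ∈ innerPolar r s :=
  fun x _ => by rwa [inner_zero_right]

theorem innerPolar_subset_closedBall {r ε : ℝ} {s : Set E} (hε : 0 < ε)
    (hs : ball 0 ε ⊆ s) : innerPolar r s ⊆ closedBall 0 (2 * r / ε) := by
  intro y hy
  rw [mem_closedBall_zero_iff, le_div_iff₀ hε]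
  rcases eq_or_ne y 0 with rfl | hy0
  · simpa using hy 0 (hs (mem_ball_self hε))
  -- test `y` against the vector of length `ε / 2` pointing in its direction
  have hyn : 0 < ‖y‖ := norm_pos_iff.2 hy0
  have hx : (ε / (2 * ‖y‖)) • y ∈ s := hs <| by
    rw [mem_ball_zero_iff, norm_smul, Real.norm_of_nonneg (by positivity)]
    field_simp
    linarith
  have h := hy _ hx
  rw [real_inner_smul_left, real_inner_self_eq_norm_sq] at h
  field_simp at h
  linarith

theorem isCompact_innerPolar [FiniteDimensional ℝ E] {r : ℝ} {K : Set E}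
    (h0 : (0 : E) ∈ interior K) : IsCompact (innerPolar r K) := by
  obtain ⟨ε, hε, hball⟩ := Metric.mem_nhds_iff.1 (mem_interior_iff_mem_nhds.1 h0)
  exact Metric.isCompact_of_isClosed_isBounded (isClosed_innerPolar r K)
    (isBounded_closedBall.subset (innerPolar_subset_closedBall hε hball))

theorem exists_inner_lt_of_notMem [CompleteSpace E] {s : Set E} (hconv : Convex ℝ s)
    (hclosed : IsClosed s) {x : E} (hx : x ∉ s) :
    ∃ (c : E) (u : ℝ), (∀ a ∈ s, ⟪c, a⟫ < u) ∧ u < ⟪c, x⟫ := by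
  obtain ⟨f, u, hs, hx⟩ := geometric_hahn_banach_closed_point hconv hclosed hx
  exact ⟨(InnerProductSpace.toDual ℝ E).symm f, u,
    by simpa only [InnerProductSpace.toDual_symm_apply] using hs,
    by simpa only [InnerProductSpace.toDual_symm_apply] using hx⟩

theorem innerPolar_innerPolar_subset [CompleteSpace E] {r : ℝ} (hr : 0 < r) {K : Set E}
    (hconv : Convex ℝ K) (hclosed : IsClosed K) (h0 : (0 : E) ∈ K) :
    innerPolar r (innerPolar r K) ⊆ K := by
  intro x hx
  by_contra hxK
  obtain ⟨c, u, hK, hcx⟩ := exists_inner_lt_of_notMem hconv hclosed hxK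
  have hu : 0 < u := by simpa using hK 0 h0
  have hc : (r / u) • c ∈ innerPolar r K := fun a ha => by
    rw [real_inner_smul_right, real_inner_comm]
    calc r / u * ⟪c, a⟫ ≤ r / u * u := by gcongr; exact (hK a ha).le
      _ = r := div_mul_cancel₀ r hu.ne'
  have h := hx _ hc
  rw [real_inner_smul_left] at h
  have : r / u * u < r / u * ⟪c, x⟫ := by gcongr
  rw [div_mul_cancel₀ r hu.ne'] at this
  linarith

variable (V : Submodule ℝ E) [V.HasOrthogonalProjection]

theorem inner_starProjection_left_of_mem (x : E) {y : E} (hy : y ∈ V) :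
    ⟪V.starProjection x, y⟫ = ⟪x, y⟫ := by
  rw [Submodule.inner_starProjection_left_eq_right, Submodule.starProjection_eq_self_iff.2 hy]

theorem inter_innerPolar_image_starProjection (r : ℝ) (s : Set E) :
    (V : Set E) ∩ innerPolar r (V.starProjection '' s) = (V : Set E) ∩ innerPolar r s := by
  ext y
  simp only [mem_inter_iff, SetLike.mem_coe, innerPolar, mem_ofPred_eq, forall_mem_image]
  exact and_congr_right fun hy => by simp only [inner_starProjection_left_of_mem V _ hy]

theorem image_starProjection_innerPolar_subset (r : ℝ) (K : Set E) :
    V.starProjection '' innerPolar r K ⊆ (V : Set E) ∩ innerPolar r (K ∩ V) := by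
  rintro _ ⟨w, hw, rfl⟩
  refine ⟨V.starProjection_apply_mem w, fun x ⟨hxK, hxV⟩ => ?_⟩
  rw [← Submodule.inner_starProjection_left_eq_right, Submodule.starProjection_eq_self_iff.2 hxV]
  exact hw x hxK

theorem inter_innerPolar_inter_eq_image_starProjection [FiniteDimensional ℝ E] {r : ℝ}
    (hr : 0 < r) {K : Set E} (hconv : Convex ℝ K) (hclosed : IsClosed K)
    (h0 : (0 : E) ∈ interior K) :
    (V : Set E) ∩ innerPolar r (K ∩ V) = V.starProjection '' innerPolar r K := by
  refine Subset.antisymm (fun z hz => ?_) (image_starProjection_innerPolar_subset V r K)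
  by_contra hzP
  -- a functional separating `z` from the projected polar may be taken in `V`; after
  -- rescaling it lies in the bipolar `K`, hence in `K ∩ V`, contradicting `z ∈ (K ∩ V)°`
  obtain ⟨c, u, hP, hcz⟩ := exists_inner_lt_of_notMem
    ((convex_innerPolar r K).linear_image V.starProjection.toLinearMap)
    ((isCompact_innerPolar h0).image V.starProjection.continuous).isClosed hzP
  have hu : 0 < u := by
    simpa using hP 0 ⟨0, zero_mem_innerPolar hr.le K, map_zero _⟩
  set x := (r / u) • V.starProjection c
  have hxK : x ∈ K := by
    refine innerPolar_innerPolar_subset hr hconv hclosed (interior_subset h0) fun w hw => ?_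
    rw [real_inner_smul_right, real_inner_comm, Submodule.inner_starProjection_left_eq_right]
    calc r / u * ⟪c, V.starProjection w⟫ ≤ r / u * u := by gcongr; exact (hP _ ⟨w, hw, rfl⟩).le
      _ = r := div_mul_cancel₀ r hu.ne'
  have h := hz.2 x ⟨hxK, V.smul_mem _ (V.starProjection_apply_mem c)⟩
  rw [real_inner_smul_left, inner_starProjection_left_of_mem V c hz.1] at h
  have : r / u * u < r / u * ⟪c, z⟫ := by gcongr
  rw [div_mul_cancel₀ r hu.ne'] at this
  linarith

end InnerPolar

section SymplecticJ

variable {n : ℕ}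

@[simp]
theorem toEuclideanLin_Jmat_inl (z : PS n) (i : Fin n) :
    Matrix.toEuclideanLin (Jmat n) z (Sum.inl i) = z (Sum.inr i) := by
  simp [Jmat, Matrix.toLpLin_apply, Matrix.fromBlocks_mulVec]

@[simp]
theorem toEuclideanLin_Jmat_inr (z : PS n) (i : Fin n) :
    Matrix.toEuclideanLin (Jmat n) z (Sum.inr i) = -z (Sum.inl i) := by
  simp [Jmat, Matrix.toLpLin_apply, Matrix.fromBlocks_mulVec, Matrix.neg_mulVec]

theorem toEuclideanLin_Jmat_mul_self :
    Matrix.toEuclideanLin (Jmat n) ∘ₗ Matrix.toEuclideanLin (Jmat n) = -LinearMap.id := by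
  ext z (i | i) <;> simp

theorem inner_toEuclideanLin_Jmat (z z' : PS n) :
    ⟪Matrix.toEuclideanLin (Jmat n) z, Matrix.toEuclideanLin (Jmat n) z'⟫ = ⟪z, z'⟫ := by
  simp only [PiLp.inner_apply, Fintype.sum_sum_type, toEuclideanLin_Jmat_inl,
    toEuclideanLin_Jmat_inr, inner_neg_neg]
  exact add_comm _ _

def symplecticJ (n : ℕ) : PS n ≃ₗᵢ[ℝ] PS n :=
  (LinearEquiv.ofLinearMap (Matrix.toEuclideanLin (Jmat n)) (-Matrix.toEuclideanLin (Jmat n))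
    (by rw [LinearMap.comp_neg, toEuclideanLin_Jmat_mul_self, neg_neg])
    (by rw [LinearMap.neg_comp, toEuclideanLin_Jmat_mul_self, neg_neg])).isometryOfInner
    inner_toEuclideanLin_Jmat

end SymplecticJ

section SymplecticPolar

variable {n : ℕ} (ℏ : ℝ)

theorem sympDual_eq_innerPolar (Ω : Set (PS n)) :
    sympDual n ℏ Ω = innerPolar ℏ (symplecticJ n '' Ω) := by
  ext z'
  simp only [sympDual, innerPolar, forall_mem_image]
  rfl

theorem sympDualIn_eq_inter_innerPolar (G : Submodule ℝ (PS n)) (Y : Set (PS n)) :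
    sympDualIn n ℏ G Y = (G : Set (PS n)) ∩ innerPolar ℏ (symplecticJ n '' Y) := by
  ext z'
  simp only [sympDualIn, innerPolar, forall_mem_image]
  rfl

variable (F : Submodule ℝ (PS n))

theorem map_symplecticJ :
    F.map ((symplecticJ n).toLinearEquiv : PS n →ₗ[ℝ] PS n)
      = F.map (Matrix.toEuclideanLin (Jmat n)) :=
  rfl

theorem image_symplecticJ_image_starProjection (Ω : Set (PS n)) :
    symplecticJ n '' (F.starProjection '' Ω)
      = (F.map (Matrix.toEuclideanLin (Jmat n))).starProjection '' (symplecticJ n '' Ω) := by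
  simp only [image_image, ← map_symplecticJ, Submodule.starProjection_map_apply,
    LinearIsometryEquiv.symm_apply_apply]

theorem image_symplecticJ_inter (Ω : Set (PS n)) :
    symplecticJ n '' (Ω ∩ F) = symplecticJ n '' Ω ∩ F.map (Matrix.toEuclideanLin (Jmat n)) := by
  rw [image_inter (symplecticJ n).injective, ← map_symplecticJ, Submodule.map_coe]
  rfl

end SymplecticPolar

theorem stmt5_general (n : ℕ) (ℏ : ℝ) (hℏ : 0 < ℏ) (Ω : Set (PS n))
    (hc : IsCompact Ω) (hconv : Convex ℝ Ω)
    (h0 : (0 : PS n) ∈ interior Ω)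
    (F : Submodule ℝ (PS n)) :
    sympDualIn n ℏ (F.map (Matrix.toEuclideanLin (Jmat n)))
        ((fun z => (Submodule.orthogonalProjectionOnto F z : PS n)) '' Ω)
      = sympDual n ℏ Ω ∩ ((F.map (Matrix.toEuclideanLin (Jmat n)) : Submodule ℝ (PS n)) : Set (PS n)) ∧
    sympDualIn n ℏ (F.map (Matrix.toEuclideanLin (Jmat n))) (Ω ∩ (F : Set (PS n)))
      = (fun z => (Submodule.orthogonalProjectionOnto (F.map (Matrix.toEuclideanLin (Jmat n))) z : PS n)) ''
          sympDual n ℏ Ω := by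
  set G := F.map (Matrix.toEuclideanLin (Jmat n))
  set J := symplecticJ n
  have hJconv : Convex ℝ (J '' Ω) := hconv.linear_image J.toLinearMap
  have hJclosed : IsClosed (J '' Ω) := (hc.image J.continuous).isClosed
  have hJ0 : (0 : PS n) ∈ interior (J '' Ω) := by
    rw [← LinearIsometryEquiv.coe_toHomeomorph, ← Homeomorph.image_interior]
    exact ⟨0, h0, map_zero J⟩
  simp only [← Submodule.starProjection_apply, sympDualIn_eq_inter_innerPolar,
    sympDual_eq_innerPolar, image_symplecticJ_image_starProjection, image_symplecticJ_inter]
  refine ⟨?_, inter_innerPolar_inter_eq_image_starProjection G hℏ hJconv hJclosed hJ0⟩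
  rw [inter_innerPolar_image_starProjection, inter_comm]

/-- symplectic polar duality exchanges orthogonal projections and
intersections: `(Π_F Ω)^{ℏ,σ,J(F)} = Ω^{ℏ,σ} ∩ J(F)` and
`(Ω ∩ F)^{ℏ,σ,J(F)} = Π_{J(F)}(Ω^{ℏ,σ})` for a centrally symmetric convex body `Ω`. -/
theorem stmt5 (n : ℕ) (ℏ : ℝ) (hℏ : 0 < ℏ) (Ω : Set (PS n))
    (hc : IsCompact Ω) (hconv : Convex ℝ Ω) (hsym : Ω = -Ω)
    (h0 : (0 : PS n) ∈ interior Ω)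
    (F : Submodule ℝ (PS n)) :
    sympDualIn n ℏ (F.map (Matrix.toEuclideanLin (Jmat n)))
        ((fun z => (Submodule.orthogonalProjectionOnto F z : PS n)) '' Ω)
      = sympDual n ℏ Ω ∩ ((F.map (Matrix.toEuclideanLin (Jmat n)) : Submodule ℝ (PS n)) : Set (PS n)) ∧
    sympDualIn n ℏ (F.map (Matrix.toEuclideanLin (Jmat n))) (Ω ∩ (F : Set (PS n)))
      = (fun z => (Submodule.orthogonalProjectionOnto (F.map (Matrix.toEuclideanLin (Jmat n))) z : PS n)) ''
          sympDual n ℏ Ω :=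
  stmt5_general n ℏ hℏ Ω hc hconv h0 F
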